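/- arXiv:2412.18071 — 2 statements merged into one kernel-verified Lean document; each statement's English description precedes it below -/
import Mathlib

section
/- For every i ∈ I, the set S_i satisfies the recursion S_i = {x_i} ∪ ⋃_{j∈I} ⋃_{m∈E_{ji}} [x_i, S_j + m], where S_j + m denotes the translate of S_j by m and [x, S] = {t·x + (1−t)·y : y ∈ S, t ∈ [0,1]}. -/
open scoped BigOperators
open MeasureTheory

noncomputable section

/-- `ℤ^n`, the exponent lattice. -/
abbrev Zn (n : ℕ) : Type := Fin n → ℤ

/-- `ℝ^n`. -/
abbrev Rn (n : ℕ) : Type := Fin n → ℝ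

/-- The Laurent polynomial ring `R_n = ℂ[z_1^{±1},…,z_n^{±1}]`, realized as the group
algebra of `ℤ^n` over `ℂ`. -/
abbrev LaurentRing (n : ℕ) : Type := AddMonoidAlgebra ℂ (Zn n)

/-- The embedding `ℤ^n → ℝ^n`. -/
def zToR {n : ℕ} (m : Zn n) : Rn n := fun j => (m j : ℝ)

/-- A bounded based sequence `F^•` of finite-rank free `R_n`-modules: a finite index set
`I = ⊔_k I_k` (with `I_k = ∅` for `k > 0` and `I_0 ≠ ∅`), recorded via a degree function,
together with the matrix entries `d^k_{ij} ∈ R_n` of the maps `F^k → F^{k+1}`. -/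
structure BasedSeq (n : ℕ) where
  I : Type
  fintypeI : Fintype I
  deg : I → ℤ
  deg_nonpos : ∀ i, deg i ≤ 0
  exists_deg_zero : ∃ i, deg i = 0
  d : I → I → LaurentRing n
  d_eq_zero : ∀ i j, deg i ≠ deg j + 1 → d i j = 0

attribute [instance] BasedSeq.fintypeI

/-- Chains witnessing membership in `E_{ij}`: `EChain F i j m` holds iff there is a chain
`j = i_0, i_1, …, i_k = i` with `deg i_ℓ = deg i_{ℓ-1} + 1` at each step, exponents
`m_ℓ` in the support of the corresponding matrix entry, and `m = m_1 + ⋯ + m_k`. -/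
inductive EChain {n : ℕ} (F : BasedSeq n) : F.I → F.I → Zn n → Prop where
  | base {i j : F.I} {m : Zn n} :
      F.deg i = F.deg j + 1 → m ∈ (F.d i j).coeff.support → EChain F i j m
  | step {i j k : F.I} {m m' : Zn n} :
      EChain F j k m → F.deg i = F.deg j + 1 → m' ∈ (F.d i j).coeff.support →
      EChain F i k (m + m')

/-- The subset `E_{ij} ⊆ ℤ^n`. -/
def Eset {n : ℕ} (F : BasedSeq n) (i j : F.I) : Set (Zn n) := {m | EChain F i j m}

/-- The condition `(m_1, …, m_k) ∈ E_{i_1 i_0} × ⋯ × E_{i_k i_{k-1}}`. -/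
def goodTuple {n : ℕ} (F : BasedSeq n) {k : ℕ} (c : Fin (k + 1) → F.I)
    (m : Fin k → Zn n) : Prop :=
  ∀ ℓ : Fin k, m ℓ ∈ Eset F (c ℓ.succ) (c ℓ.castSucc)

/-- The vertex tuple `(x_{i_0}, x_{i_1}+m_1, …, x_{i_k}+m_1+⋯+m_k)` in `ℝ^n`. -/
def vtx {n : ℕ} (F : BasedSeq n) (x : F.I → Rn n) {k : ℕ}
    (c : Fin (k + 1) → F.I) (m : Fin k → Zn n) : Fin (k + 1) → Rn n :=
  fun a => x (c a) + zToR (∑ ℓ ∈ Finset.univ.filter (fun ℓ : Fin k => (ℓ : ℕ) < (a : ℕ)), m ℓ)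

/-- Membership in `X(F^•)_k`: the tuple `y` represents (mod a common `ℤ^n`-translation `t`)
one of the linear `k`-simplices `[x_{i_0}, x_{i_1}+m_1, …, x_{i_k}+m_1+⋯+m_k] mod ℤ^n`. -/
def InX {n : ℕ} (F : BasedSeq n) (x : F.I → Rn n) (k : ℕ)
    (y : Fin (k + 1) → Rn n) : Prop :=
  ∃ (c : Fin (k + 1) → F.I) (m : Fin k → Zn n) (t : Zn n),
    goodTuple F c m ∧ ∀ a, y a = vtx F x c m a + zToR t

/-- The integer lattice `ℤ^n ⊆ ℝ^n` as an additive subgroup. -/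
def intLattice (n : ℕ) : AddSubgroup (Rn n) :=
  AddSubgroup.pi Set.univ fun _ => AddSubgroup.zmultiples (1 : ℝ)

/-- The torus `T^n = ℝ^n/ℤ^n`. -/
abbrev Torus (n : ℕ) := Rn n ⧸ intLattice n

/-- The projection `π : ℝ^n → T^n`. -/
def toTorus {n : ℕ} : Rn n → Torus n := QuotientAddGroup.mk

/-- The tropical Lagrangian coamoeba `T(F^•) ⊆ T^n`. -/
def TropT {n : ℕ} (F : BasedSeq n) (x : F.I → Rn n) : Set (Torus n) :=
  ⋃ (k : ℕ), ⋃ (c : Fin (k + 1) → F.I), ⋃ (m : Fin k → Zn n), ⋃ (_ : goodTuple F c m),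
    toTorus '' convexHull ℝ (Set.range (vtx F x c m))

/-- The subset `S_i ⊆ ℝ^n`. -/
def Sset {n : ℕ} (F : BasedSeq n) (x : F.I → Rn n) (i : F.I) : Set (Rn n) :=
  ⋃ (k : ℕ), ⋃ (c : Fin (k + 1) → F.I), ⋃ (m : Fin k → Zn n),
    ⋃ (_ : c 0 = i ∧ goodTuple F c m), convexHull ℝ (Set.range (vtx F x c m))

/-- `[x, S] = {t·x + (1−t)·y : y ∈ S, t ∈ [0,1]}`. -/
def joinSet {n : ℕ} (x : Rn n) (S : Set (Rn n)) : Set (Rn n) :=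
  {p | ∃ y ∈ S, ∃ t ∈ Set.Icc (0 : ℝ) 1, p = t • x + (1 - t) • y}

/-! The simplex on the vertex tuple `(x_{i_0}, x_{i_1} + m_1, …, x_{i_k} + m_1 + ⋯ + m_k)` is the
join of its first vertex `x_{i_0}` with the translate by `m_1` of the simplex of the shorter chain
`(i_1, …, i_k)` with exponents `(m_2, …, m_k)`, and `m_1 ∈ E_{i_1 i_0}`. Peeling off the first
vertex of every chain in the definition of `S_i` therefore gives the recursion; the chains of
length zero contribute `{x_i}`. -/

section Recursion

variable {n : ℕ}

@[simp]
lemma zToR_zero : zToR (0 : Zn n) = 0 := by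
  funext; simp [zToR]

lemma zToR_add (a b : Zn n) : zToR (a + b) = zToR a + zToR b := by
  funext; simp [zToR]

lemma joinSet_eq_convexJoin (x : Rn n) (S : Set (Rn n)) : joinSet x S = convexJoin ℝ {x} S := by
  ext p
  simp only [joinSet, convexJoin_singleton_left, Set.mem_iUnion, segment, Set.mem_ofPred_eq,
    Set.mem_Icc, exists_prop]
  constructor
  · rintro ⟨y, hy, t, ⟨ht₀, ht₁⟩, rfl⟩
    exact ⟨y, hy, t, 1 - t, ht₀, sub_nonneg.2 ht₁, add_sub_cancel t 1, rfl⟩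
  · rintro ⟨y, hy, a, b, ha, hb, hab, rfl⟩
    obtain rfl : b = 1 - a := eq_sub_of_add_eq' hab
    exact ⟨y, hy, a, ⟨ha, by linarith⟩, rfl⟩

lemma joinSet_mono (x : Rn n) {S T : Set (Rn n)} (h : S ⊆ T) : joinSet x S ⊆ joinSet x T := by
  rintro p ⟨y, hy, hp⟩
  exact ⟨y, h hy, hp⟩

variable (F : BasedSeq n) (x : F.I → Rn n)

lemma goodTuple_cons_iff {k : ℕ} (i : F.I) (c : Fin (k + 1) → F.I) (m₀ : Zn n)
    (m : Fin k → Zn n) :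
    goodTuple F (Fin.cons i c) (Fin.cons m₀ m) ↔ m₀ ∈ Eset F (c 0) i ∧ goodTuple F c m := by
  simp [goodTuple, Fin.forall_fin_succ]

lemma vtx_zero {k : ℕ} (c : Fin (k + 1) → F.I) (m : Fin k → Zn n) :
    vtx F x c m 0 = x (c 0) := by
  simp [vtx]

lemma range_vtx_of_fin_one (c : Fin 1 → F.I) (m : Fin 0 → Zn n) :
    Set.range (vtx F x c m) = {x (c 0)} := by
  ext
  simp [Fin.exists_fin_one, vtx_zero, eq_comm]

lemma vtx_cons_succ {k : ℕ} (i : F.I) (c : Fin (k + 1) → F.I) (m₀ : Zn n)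
    (m : Fin k → Zn n) (a : Fin (k + 1)) :
    vtx F x (Fin.cons i c) (Fin.cons m₀ m) a.succ = vtx F x c m a + zToR m₀ := by
  simp only [vtx, Fin.cons_succ, Finset.sum_filter, Fin.sum_univ_succ, Fin.cons_zero,
    Fin.val_zero, Fin.val_succ, Nat.succ_pos, if_true, Nat.succ_lt_succ_iff, zToR_add]
  abel

lemma range_vtx_cons {k : ℕ} (i : F.I) (c : Fin (k + 1) → F.I) (m₀ : Zn n)
    (m : Fin k → Zn n) :
    Set.range (vtx F x (Fin.cons i c) (Fin.cons m₀ m)) =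
      insert (x i) ((· + zToR m₀) '' Set.range (vtx F x c m)) := by
  rw [Fin.range_fin_succ, vtx_zero, Fin.cons_zero, ← Set.range_comp]
  congr 2
  funext a
  exact vtx_cons_succ F x i c m₀ m a

lemma convexHull_range_vtx_cons {k : ℕ} (i : F.I) (c : Fin (k + 1) → F.I) (m₀ : Zn n)
    (m : Fin k → Zn n) :
    convexHull ℝ (Set.range (vtx F x (Fin.cons i c) (Fin.cons m₀ m))) =
      joinSet (x i) ((· + zToR m₀) '' convexHull ℝ (Set.range (vtx F x c m))) := by
  rw [range_vtx_cons, convexHull_insert ((Set.range_nonempty _).image _), joinSet_eq_convexJoin,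
    ← Set.add_singleton, ← Set.add_singleton, convexHull_add, convexHull_singleton]

lemma mem_Sset_iff {i : F.I} {p : Rn n} :
    p ∈ Sset F x i ↔ ∃ (k : ℕ) (c : Fin (k + 1) → F.I) (m : Fin k → Zn n),
      (c 0 = i ∧ goodTuple F c m) ∧ p ∈ convexHull ℝ (Set.range (vtx F x c m)) := by
  simp only [Sset, Set.mem_iUnion, exists_prop]

lemma convexHull_range_vtx_subset_Sset {k : ℕ} {c : Fin (k + 1) → F.I} {m : Fin k → Zn n}
    (hcm : goodTuple F c m) : convexHull ℝ (Set.range (vtx F x c m)) ⊆ Sset F x (c 0) :=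
  fun _ hp => (mem_Sset_iff F x).2 ⟨k, c, m, ⟨rfl, hcm⟩, hp⟩

lemma self_mem_Sset (i : F.I) : x i ∈ Sset F x i := by
  refine (mem_Sset_iff F x).2 ⟨0, fun _ => i, Fin.elim0, ⟨rfl, fun ℓ => ℓ.elim0⟩, ?_⟩
  rw [range_vtx_of_fin_one, convexHull_singleton]
  rfl

lemma joinSet_image_Sset_subset {i j : F.I} {m₀ : Zn n} (hm₀ : m₀ ∈ Eset F j i) :
    joinSet (x i) ((· + zToR m₀) '' Sset F x j) ⊆ Sset F x i := by
  intro p hp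
  rw [joinSet_eq_convexJoin, mem_convexJoin] at hp
  obtain ⟨_, rfl, _, ⟨y, hy, rfl⟩, hseg⟩ := hp
  obtain ⟨k, c, m, ⟨rfl, hcm⟩, hyc⟩ := (mem_Sset_iff F x).1 hy
  refine convexHull_range_vtx_subset_Sset F x ((goodTuple_cons_iff F i c m₀ m).2 ⟨hm₀, hcm⟩) ?_
  rw [convexHull_range_vtx_cons, joinSet_eq_convexJoin, mem_convexJoin]
  exact ⟨x i, rfl, y + zToR m₀, ⟨y, hyc, rfl⟩, hseg⟩

end Recursion

theorem stmt8_general (n : ℕ) (F : BasedSeq n) (x : F.I → Rn n) (i : F.I) :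
    Sset F x i = {x i} ∪ ⋃ (j : F.I), ⋃ m ∈ Eset F j i,
      joinSet (x i) ((fun y => y + zToR m) '' Sset F x j) := by
  ext p
  simp only [Set.mem_union, Set.mem_singleton_iff, Set.mem_iUnion, exists_prop]
  constructor
  · rw [mem_Sset_iff]
    rintro ⟨k, c, m, ⟨rfl, hcm⟩, hp⟩
    cases k with
    | zero =>
      left
      rwa [range_vtx_of_fin_one, convexHull_singleton] at hp
    | succ k =>
      right
      induction c using Fin.consCases with | cons i c => ?_
      induction m using Fin.consCases with | cons m₀ m => ?_
      obtain ⟨hm₀, hcm⟩ := (goodTuple_cons_iff F i c m₀ m).1 hcm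
      rw [convexHull_range_vtx_cons] at hp
      exact ⟨c 0, m₀, hm₀,
        joinSet_mono _ (Set.image_mono (convexHull_range_vtx_subset_Sset F x hcm)) hp⟩
  · rintro (rfl | ⟨j, m₀, hm₀, hp⟩)
    · exact self_mem_Sset F x i
    · exact joinSet_image_Sset_subset F x hm₀ hp

/-- the recursion `S_i = {x_i} ∪ ⋃_{j} ⋃_{m ∈ E_{ji}} [x_i, S_j + m]`. -/
theorem stmt8 (n : ℕ) (hn : 1 ≤ n) (F : BasedSeq n) (x : F.I → Rn n) (i : F.I) :
    Sset F x i = {x i} ∪ ⋃ (j : F.I), ⋃ m ∈ Eset F j i,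
      joinSet (x i) ((fun y => y + zToR m) '' Sset F x j) :=
  stmt8_general n F x i
end
end

section
/- For every i ∈ I, the set S_i ⊆ ℝ^n is compact. -/
open scoped BigOperators
open MeasureTheory

noncomputable section

/-!
Every exponent in `E_{ij}` is a sum along a degree-increasing chain of exponents occurring in the
finitely many Laurent polynomials `d^k_{ij}`, so each `E_{ij}` is finite; since degrees lie in a
bounded range, the length `k` of the chains defining `S_i` is bounded too. Hence `S_i` is a finite
union of convex hulls of finite sets.
-/

open scoped Pointwise

variable {n : ℕ} {F : BasedSeq n}

lemma EChain.deg_lt {i j : F.I} {m : Zn n} (h : EChain F i j m) : F.deg j < F.deg i := by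
  induction h <;> omega

lemma Eset_subset_support_union (i j : F.I) :
    Eset F i j ⊆ ((F.d i j).coeff.support : Set (Zn n)) ∪
      ⋃ (j' : F.I) (_ : F.deg j' < F.deg i),
        Eset F j' j + ((F.d i j').coeff.support : Set (Zn n)) := by
  rintro _ (⟨_, hm⟩ | @⟨_, j', _, m, m', hc, hd, hm'⟩)
  · exact Or.inl hm
  · exact Or.inr <| Set.mem_iUnion₂.2 ⟨j', by omega, Set.add_mem_add hc hm'⟩

lemma Eset_finite (i j : F.I) : (Eset F i j).Finite := by
  induction i using
    (Finite.wellFounded_of_trans_of_irrefl fun a b => F.deg a < F.deg b).induction with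
  | _ i ih =>
    refine ((Finset.finite_toSet _).union ?_).subset (Eset_subset_support_union i j)
    exact Set.finite_iUnion fun j' =>
      Set.finite_iUnion fun hj' => (ih j' hj').add (Finset.finite_toSet _)

def allExponents (F : BasedSeq n) : Set (Zn n) := ⋃ (i : F.I) (j : F.I), Eset F i j

lemma allExponents_finite (F : BasedSeq n) : (allExponents F).Finite :=
  Set.finite_iUnion fun i => Set.finite_iUnion fun j => Eset_finite i j

lemma BasedSeq.exists_neg_le_deg (F : BasedSeq n) : ∃ N : ℕ, ∀ j, -(N : ℤ) ≤ F.deg j := by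
  obtain ⟨B, hB⟩ := (Set.finite_range F.deg).bddBelow
  exact ⟨B.natAbs, fun j => le_trans (by omega) (hB ⟨j, rfl⟩)⟩

lemma goodTuple.deg_le {k : ℕ} {c : Fin (k + 1) → F.I} {m : Fin k → Zn n}
    (h : goodTuple F c m) (a : Fin (k + 1)) : (a : ℤ) + F.deg (c 0) ≤ F.deg (c a) := by
  induction a using Fin.induction with
  | zero => simp
  | succ a ih =>
    have := (h a).deg_lt
    simp only [Fin.val_castSucc, Fin.val_succ] at ih ⊢
    omega

lemma goodTuple.length_le {k : ℕ} {c : Fin (k + 1) → F.I} {m : Fin k → Zn n}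
    (h : goodTuple F c m) : (k : ℤ) ≤ -F.deg (c 0) := by
  have := h.deg_le (Fin.last k)
  have := F.deg_nonpos (c (Fin.last k))
  simp only [Fin.val_last] at *
  omega

lemma Sset_eq_biUnion (x : F.I → Rn n) (i : F.I) {N : ℕ} (hN : ∀ j, -(N : ℤ) ≤ F.deg j) :
    Sset F x i = ⋃ k ∈ Set.Iic N, ⋃ (c : Fin (k + 1) → F.I),
      ⋃ m ∈ Set.univ.pi fun _ => allExponents F,
        ⋃ (_ : c 0 = i ∧ goodTuple F c m), convexHull ℝ (Set.range (vtx F x c m)) := by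
  ext y
  simp only [Sset, Set.mem_iUnion, Set.mem_Iic, Set.mem_univ_pi, allExponents, exists_prop]
  constructor
  · rintro ⟨k, c, m, hcm, hy⟩
    have := hcm.2.length_le
    have := hN (c 0)
    exact ⟨k, by omega, c, m, fun ℓ => ⟨_, _, hcm.2 ℓ⟩, hcm, hy⟩
  · rintro ⟨k, -, c, m, -, hcm, hy⟩
    exact ⟨k, c, m, hcm, hy⟩

theorem stmt10_general (n : ℕ) (F : BasedSeq n) (x : F.I → Rn n) (i : F.I) :
    IsCompact (Sset F x i) := by
  obtain ⟨N, hN⟩ := F.exists_neg_le_deg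
  rw [Sset_eq_biUnion x i hN]
  refine (Set.finite_Iic N).isCompact_biUnion fun k _ => isCompact_iUnion fun c => ?_
  refine (Set.Finite.pi fun _ => allExponents_finite F).isCompact_biUnion fun m _ => ?_
  exact isCompact_iUnion fun _ => (Set.finite_range _).isCompact_convexHull ℝ

/-- each `S_i` is compact. -/
theorem stmt10 (n : ℕ) (hn : 1 ≤ n) (F : BasedSeq n) (x : F.I → Rn n) (i : F.I) :
    IsCompact (Sset F x i) :=
  stmt10_general n F x i

end
end
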